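/- Among all matrices P ∈ ℝ^{m×n} satisfying PS = I_m (equivalently SPS = S with PS the identity), the matrix P* = (SᵀW⁻¹S)⁻¹SᵀW⁻¹ minimizes the trace of the reconciled error covariance Tr(SPW PᵀSᵀ), where W is the symmetric positive definite covariance of the base forecast errors and S has full column rank. -/

import Mathlib

/-!
Every `P` with `P * S = 1` differs from the generalised least squares projection
`G = (SᵀW⁻¹S)⁻¹SᵀW⁻¹` by some `D` with `D * S = 0`. The cross term `D * W * Gᵀ` is
`D * W * W⁻¹ * S * (SᵀW⁻¹S)⁻¹ = D * S * (SᵀW⁻¹S)⁻¹ = 0`, so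
`P * W * Pᵀ = G * W * Gᵀ + D * W * Dᵀ` exceeds `G * W * Gᵀ` in the Loewner order, and
conjugating by `S` and taking traces preserves this.
-/

open Matrix

namespace Matrix

variable {k m n : Type*} [Fintype m] [Fintype n] [DecidableEq m] [DecidableEq n]

noncomputable def glsProjection (S : Matrix n m ℝ) (W : Matrix n n ℝ) : Matrix m n ℝ :=
  (Sᵀ * W⁻¹ * S)⁻¹ * Sᵀ * W⁻¹

variable {S : Matrix n m ℝ} {W : Matrix n n ℝ}

theorem glsProjection_mul_self (hW : W.PosDef) (hS : Function.Injective S.mulVec) :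
    glsProjection S W * S = 1 := by
  have hA : (Sᵀ * W⁻¹ * S).PosDef := by
    simpa only [conjTranspose_eq_transpose_of_trivial] using
      hW.inv.conjTranspose_mul_mul_same hS
  rw [glsProjection, Matrix.mul_assoc, Matrix.mul_assoc, ← Matrix.mul_assoc Sᵀ]
  exact nonsing_inv_mul _ hA.det_pos.ne'.isUnit

theorem mul_mul_transpose_glsProjection_eq_zero [Fintype k] (hW : IsUnit W.det)
    (hW_symm : W.IsSymm) {D : Matrix k n ℝ} (hD : D * S = 0) :
    D * W * (glsProjection S W)ᵀ = 0 := by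
  have hWinv_symm : (W⁻¹)ᵀ = W⁻¹ := by rw [transpose_nonsing_inv, hW_symm.eq]
  calc D * W * (glsProjection S W)ᵀ
      = D * (W * W⁻¹) * S * ((Sᵀ * W⁻¹ * S)⁻¹)ᵀ := by
        simp only [glsProjection, transpose_mul, transpose_transpose, hWinv_symm,
          Matrix.mul_assoc]
    _ = 0 := by rw [mul_nonsing_inv W hW, Matrix.mul_one, hD, Matrix.zero_mul]

theorem mul_mul_transpose_eq_glsProjection_add (hW : W.PosDef)
    (hS : Function.Injective S.mulVec) {P : Matrix m n ℝ} (hP : P * S = 1) :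
    P * W * Pᵀ = glsProjection S W * W * (glsProjection S W)ᵀ
      + (P - glsProjection S W) * W * (P - glsProjection S W)ᵀ := by
  set G := glsProjection S W
  set D := P - G
  have hD : D * S = 0 := by rw [Matrix.sub_mul, hP, glsProjection_mul_self hW hS, sub_self]
  have hW_symm : W.IsSymm := isHermitian_iff_isSymm.mp hW.isHermitian
  have hcross : D * W * Gᵀ = 0 :=
    mul_mul_transpose_glsProjection_eq_zero hW.det_pos.ne'.isUnit hW_symm hD
  have hcross' : G * W * Dᵀ = 0 := by
    simpa only [transpose_mul, transpose_transpose, hW_symm.eq, transpose_zero,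
      Matrix.mul_assoc] using congrArg transpose hcross
  have hPGD : P = G + D := by simp only [D, add_sub_cancel]
  rw [hPGD, transpose_add, Matrix.add_mul, Matrix.add_mul, Matrix.mul_add, Matrix.mul_add,
    hcross, hcross', add_zero, zero_add]

theorem PosSemidef.sub_glsProjection (hW : W.PosDef) (hS : Function.Injective S.mulVec)
    {P : Matrix m n ℝ} (hP : P * S = 1) :
    (P * W * Pᵀ - glsProjection S W * W * (glsProjection S W)ᵀ).PosSemidef := by
  rw [mul_mul_transpose_eq_glsProjection_add hW hS hP, add_sub_cancel_left]
  simpa only [conjTranspose_eq_transpose_of_trivial] using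
    hW.posSemidef.mul_mul_conjTranspose_same (P - glsProjection S W)

theorem trace_glsProjection_le [Fintype k] (hW : W.PosDef) (hS : Function.Injective S.mulVec)
    {P : Matrix m n ℝ} (hP : P * S = 1) (T : Matrix k m ℝ) :
    (T * glsProjection S W * W * (glsProjection S W)ᵀ * Tᵀ).trace ≤
      (T * P * W * Pᵀ * Tᵀ).trace := by
  have h := ((PosSemidef.sub_glsProjection hW hS hP).mul_mul_conjTranspose_same T).trace_nonneg
  rw [conjTranspose_eq_transpose_of_trivial, Matrix.mul_sub, Matrix.sub_mul, trace_sub] at h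
  simpa only [Matrix.mul_assoc, sub_nonneg] using h

end Matrix

/-- MinT optimality: among all `P` with `PS = I`, the matrix
`P* = (SᵀW⁻¹S)⁻¹SᵀW⁻¹` minimizes the trace of the reconciled error covariance
`Tr(SPWPᵀSᵀ)`, where `W` is the symmetric positive definite covariance of the base forecast
errors and `S` has full column rank. -/
theorem minT_trace_optimal {n m : ℕ}
    (S : Matrix (Fin n) (Fin m) ℝ) (W : Matrix (Fin n) (Fin n) ℝ)
    (hW : W.PosDef) (hS : Function.Injective S.mulVec)
    (P : Matrix (Fin m) (Fin n) ℝ) (hP : P * S = 1) :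
    (S * ((S.transpose * W⁻¹ * S)⁻¹ * S.transpose * W⁻¹) * W *
        ((S.transpose * W⁻¹ * S)⁻¹ * S.transpose * W⁻¹).transpose * S.transpose).trace ≤
      (S * P * W * P.transpose * S.transpose).trace :=
  trace_glsProjection_le hW hS hP S
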